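/- arXiv:1508.07149 — 6 statements merged into one kernel-verified Lean document; each statement's English description precedes it below -/
import Mathlib

section
/- For any graph G of order n ≥ k with k ≥ 3, τ_k(G) ≤ min over all S ⊆ V(G) with |S| = k of ⌊|E_G[S, S̄]| / k⌋, where S̄ = V(G) \ S and E_G[S, S̄] denotes the set of edges between S and S̄. -/
open SimpleGraph Finset

variable {V : Type*}

/-- A pedant `S`-Steiner tree in `G`: a subtree of `G` containing `S` in which
every vertex of `S` has degree one. -/
def IsPedantTree [Fintype V] (G : SimpleGraph V) (S : Finset V) (T : G.Subgraph) : Prop :=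
  T.coe.IsTree ∧ (↑S : Set V) ⊆ T.verts ∧ ∀ v ∈ S, (T.neighborSet v).ncard = 1

/-- Two pedant `S`-Steiner trees are internally disjoint if they are edge-disjoint and
their vertex sets intersect exactly in `S`. -/
def InternallyDisjoint [Fintype V] (G : SimpleGraph V) (S : Finset V)
    (T T' : G.Subgraph) : Prop :=
  T.edgeSet ∩ T'.edgeSet = ∅ ∧ T.verts ∩ T'.verts = (↑S : Set V)

/-- The local pedant-tree connectivity `τ_G(S)`: the maximum number of pairwise
internally disjoint pedant `S`-Steiner trees in `G`. -/
noncomputable def localPedantConn [Fintype V] (G : SimpleGraph V) (S : Finset V) : ℕ :=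
  sSup {m | ∃ 𝒯 : Finset G.Subgraph, 𝒯.card = m ∧ (∀ T ∈ 𝒯, IsPedantTree G S T) ∧
    ∀ T ∈ 𝒯, ∀ T' ∈ 𝒯, T ≠ T' → InternallyDisjoint G S T T'}

/-- The pedant tree-connectivity `τ_k(G) = min {τ_G(S) : |S| = k}`. -/
noncomputable def pedantConn [Fintype V] (G : SimpleGraph V) (k : ℕ) : ℕ :=
  sInf {m | ∃ S : Finset V, S.card = k ∧ localPedantConn G S = m}

/-- The vertex connectivity of `G`: the least size of a vertex set whose removal leaves a
graph which is not preconnected, or leaves at most one vertex. -/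
noncomputable def vConn [Fintype V] (G : SimpleGraph V) : ℕ :=
  sInf {m | ∃ U : Finset V, U.card = m ∧
    (¬ (G.induce ((↑U : Set V)ᶜ)).Preconnected ∨ Fintype.card V ≤ m + 1)}


private lemma walk_closed {W : Type*} {H : SimpleGraph W} {C : Set W}
    (hC : ∀ a b, H.Adj a b → a ∈ C → b ∈ C) {a b : W} (p : H.Walk a b) (ha : a ∈ C) :
    b ∈ C := by
  induction p with
  | nil => exact ha
  | cons h p ih => exact ih (hC _ _ h ha)

/-- `τ_k(G) ≤ ⌊|E_G[S, S̄]| / k⌋` for every `k`-set `S`. -/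
theorem pedantConn_le_crossing [Fintype V] (G : SimpleGraph V) (k : ℕ)
    (h3 : 3 ≤ k) (hkn : k ≤ Fintype.card V)
    (S : Finset V) (hS : S.card = k) :
    pedantConn G k ≤
      (G.edgeSet ∩ {e : Sym2 V | ∃ u ∈ S, ∃ v, v ∉ S ∧ e = s(u, v)}).ncard / k := by
  classical
  set E : Set (Sym2 V) := G.edgeSet ∩ {e : Sym2 V | ∃ u ∈ S, ∃ v, v ∉ S ∧ e = s(u, v)} with hE
  have hk0 : 0 < k := by omega
  have hneV : Nonempty V := Fintype.card_pos_iff.mp (by omega)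
  have h1 : pedantConn G k ≤ localPedantConn G S := Nat.sInf_le ⟨S, hS, rfl⟩
  refine h1.trans ?_
  apply csSup_le
  · exact ⟨0, ∅, by simp⟩
  rintro m ⟨𝒯, hcard, hped, hdisj⟩
  rw [Nat.le_div_iff_mul_le hk0]
  -- the unique tree-neighbor of a vertex
  let nbr : G.Subgraph → V → V := fun T v =>
    if h : ∃ u, T.neighborSet v = {u} then h.choose else hneV.some
  have hnbr : ∀ T ∈ 𝒯, ∀ v ∈ S, T.neighborSet v = {nbr T v} := by
    intro T hT v hv
    obtain ⟨u, hu⟩ := Set.ncard_eq_one.mp ((hped T hT).2.2 v hv)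
    have hex : ∃ u, T.neighborSet v = {u} := ⟨u, hu⟩
    simp only [nbr, dif_pos hex]
    exact hex.choose_spec
  have hadj : ∀ T ∈ 𝒯, ∀ v ∈ S, T.Adj v (nbr T v) := by
    intro T hT v hv
    have := hnbr T hT v hv
    have : nbr T v ∈ T.neighborSet v := by rw [this]; exact rfl
    exact (SimpleGraph.Subgraph.mem_neighborSet _ _ _).mp this
  -- the tree-neighbor of a vertex of S lies outside S
  have houtS : ∀ T ∈ 𝒯, ∀ v ∈ S, nbr T v ∉ S := by
    intro T hT v hv hu
    set u := nbr T v with hudef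
    have huv : u ≠ v := (hadj T hT v hv).symm.ne
    -- u's unique neighbor is v
    have hnu : T.neighborSet u = {v} := by
      have h1 := hnbr T hT u hu
      have : v ∈ T.neighborSet u :=
        (SimpleGraph.Subgraph.mem_neighborSet _ _ _).mpr (hadj T hT v hv).symm
      rw [h1] at this
      rw [h1, Set.mem_singleton_iff.mp this]
    -- pick a third vertex of S
    obtain ⟨w, hw⟩ : (S \ {v, u}).Nonempty := by
      rw [← Finset.card_pos]
      have := Finset.le_card_sdiff ({v, u} : Finset V) S
      have h2 : ({v, u} : Finset V).card ≤ 2 := Finset.card_insert_le _ _ |>.trans (by simp)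
      omega
    have hwS : w ∈ S := (Finset.mem_sdiff.mp hw).1
    have hwvu : w ≠ v ∧ w ≠ u := by
      have := (Finset.mem_sdiff.mp hw).2
      simp at this; tauto
    have hsub := (hped T hT).2.1
    have hvT : v ∈ T.verts := hsub (by exact_mod_cast hv)
    have hwT : w ∈ T.verts := hsub (by exact_mod_cast hwS)
    have hconn : T.coe.Preconnected := (hped T hT).1.isConnected.preconnected
    obtain ⟨p⟩ := hconn ⟨v, hvT⟩ ⟨w, hwT⟩
    have hC : ∀ a b : T.verts, T.coe.Adj a b →
        a ∈ {x : T.verts | (x : V) = v ∨ (x : V) = u} →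
        b ∈ {x : T.verts | (x : V) = v ∨ (x : V) = u} := by
      rintro a b hab (ha | ha)
      · have : (b : V) ∈ T.neighborSet v := by
          rw [SimpleGraph.Subgraph.mem_neighborSet]
          simpa [ha] using hab
        rw [hnbr T hT v hv] at this
        exact Or.inr this
      · have : (b : V) ∈ T.neighborSet u := by
          rw [SimpleGraph.Subgraph.mem_neighborSet]
          simpa [ha] using hab
        rw [hnu] at this
        exact Or.inl this
    have := walk_closed hC p (Or.inl rfl)
    simp only [Set.mem_setOf_eq] at this
    rcases this with h | h
    · exact hwvu.1 h
    · exact hwvu.2 h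
  -- the crossing edges
  have hEfin : E.Finite := Set.toFinite E
  have hmap : ∀ p ∈ 𝒯 ×ˢ S, s(p.2, nbr p.1 p.2) ∈ hEfin.toFinset := by
    rintro ⟨T, v⟩ hp
    obtain ⟨hT, hv⟩ := Finset.mem_product.mp hp
    rw [Set.Finite.mem_toFinset]
    refine ⟨(hadj T hT v hv).adj_sub, ⟨v, hv, nbr T v, houtS T hT v hv, rfl⟩⟩
  have hinj : ∀ p ∈ 𝒯 ×ˢ S, ∀ q ∈ 𝒯 ×ˢ S,
      s(p.2, nbr p.1 p.2) = s(q.2, nbr q.1 q.2) → p = q := by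
    rintro ⟨T, v⟩ hp ⟨T', v'⟩ hq heq
    obtain ⟨hT, hv⟩ := Finset.mem_product.mp hp
    obtain ⟨hT', hv'⟩ := Finset.mem_product.mp hq
    have hTT' : T = T' := by
      by_contra hne
      have h1 : s(v, nbr T v) ∈ T.edgeSet := SimpleGraph.Subgraph.mem_edgeSet.mpr (hadj T hT v hv)
      have h2 : s(v', nbr T' v') ∈ T'.edgeSet :=
        SimpleGraph.Subgraph.mem_edgeSet.mpr (hadj T' hT' v' hv')
      have := (hdisj T hT T' hT' hne).1
      have : s(v, nbr T v) ∈ T.edgeSet ∩ T'.edgeSet := ⟨h1, heq ▸ h2⟩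
      rw [(hdisj T hT T' hT' hne).1] at this
      exact this
    subst hTT'
    rcases Sym2.eq_iff.mp heq with ⟨h1, _⟩ | ⟨h1, h2⟩
    · exact Prod.ext rfl h1
    · exact absurd (h1 ▸ hv) (houtS T hT v' hv')
  have hle : (𝒯 ×ˢ S).card ≤ hEfin.toFinset.card :=
    Finset.card_le_card_of_injOn _ hmap hinj
  rw [Finset.card_product, hcard, hS] at hle
  rwa [Set.ncard_eq_toFinset_card E hEfin]
end

section
/- Let k, n be integers with 3 ≤ k ≤ n. For the complete graph K_n, τ_k(K_n) = n − k. -/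
open SimpleGraph Finset

variable {V : Type*}

/-!
Each pedant `S`-tree with `|S| ≥ 3` has a vertex outside `S`: otherwise a leaf and its unique
neighbour would be each other's only neighbours and hence a whole component of the tree. Internally
disjoint trees have disjoint vertex sets outside `S`, so there are at most `n - |S|` of them. In
`K_n` this bound is attained by the stars with leaves `S` centred at the vertices outside `S`.
-/

namespace SimpleGraph

theorem Preconnected.mem_of_forall_adj_mem {X : Type*} {H : SimpleGraph X} (hH : H.Preconnected)
    {C : Set X} (hC : ∀ ⦃v w⦄, v ∈ C → H.Adj v w → w ∈ C) {a : X} (ha : a ∈ C) (b : X) :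
    b ∈ C := by
  by_contra hb
  obtain ⟨p⟩ := hH a b
  obtain ⟨d, -, hd, hd'⟩ := p.exists_boundary_dart C ha hb
  exact hd' (hC hd d.adj)

@[simps]
def starSubgraph (G : SimpleGraph V) (u : V) (S : Set V) : G.Subgraph where
  verts := insert u S
  Adj a b := G.Adj a b ∧ (a = u ∧ b ∈ S ∨ b = u ∧ a ∈ S)
  adj_sub h := h.1
  edge_vert := by rintro a b ⟨-, ⟨rfl, -⟩ | ⟨-, ha⟩⟩ <;> simp [*]
  symm := ⟨fun _ _ h => ⟨h.1.symm, h.2.symm⟩⟩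

section StarSubgraph

variable {G : SimpleGraph V} {u : V} {S : Set V}

theorem mem_starSubgraph_verts_self : u ∈ (G.starSubgraph u S).verts :=
  Set.mem_insert u S

theorem injOn_starSubgraph : Set.InjOn (G.starSubgraph · S) Sᶜ := fun u hu u' _ h => by
  have hmem : u ∈ (G.starSubgraph u' S).verts := by
    simp only at h
    exact h ▸ mem_starSubgraph_verts_self
  exact (Set.mem_insert_iff.mp hmem).resolve_right hu

theorem starSubgraph_neighborSet_of_mem (hu : u ∉ S) (hadj : ∀ s ∈ S, G.Adj u s) {v : V}
    (hv : v ∈ S) : (G.starSubgraph u S).neighborSet v = {u} := by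
  ext w
  simp only [Subgraph.mem_neighborSet, starSubgraph_adj, Set.mem_singleton_iff]
  constructor
  · rintro ⟨-, ⟨rfl, -⟩ | ⟨rfl, -⟩⟩
    · exact absurd hv hu
    · rfl
  · rintro rfl
    exact ⟨(hadj v hv).symm, Or.inr ⟨rfl, hv⟩⟩

theorem coe_starSubgraph (hadj : ∀ s ∈ S, G.Adj u s) :
    (G.starSubgraph u S).coe = starGraph ⟨u, mem_starSubgraph_verts_self⟩ := by
  ext ⟨a, ha⟩ ⟨b, hb⟩
  simp only [Subgraph.coe_adj, starSubgraph_adj, starGraph_adj, ne_eq, Subtype.mk.injEq]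
  simp only [starSubgraph_verts, Set.mem_insert_iff] at ha hb
  have := hadj a
  have := hadj b
  grind [G.ne_of_adj, G.adj_symm]

theorem isPedantTree_starSubgraph [Fintype V] {S : Finset V} (hu : u ∉ S)
    (hadj : ∀ s ∈ S, G.Adj u s) : IsPedantTree G S (G.starSubgraph u S) := by
  refine ⟨?_, Set.subset_insert u (S : Set V), fun v hv => ?_⟩
  · rw [coe_starSubgraph hadj]
    exact isTree_starGraph _
  · rw [starSubgraph_neighborSet_of_mem hu hadj hv, Set.ncard_singleton]

theorem internallyDisjoint_starSubgraph [Fintype V] {S : Finset V} {u u' : V} (hu : u ∉ S)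
    (huu' : u ≠ u') :
    InternallyDisjoint G S (G.starSubgraph u S) (G.starSubgraph u' S) := by
  constructor
  · ext e
    induction e with
    | _ a b =>
      simp only [Set.mem_inter_iff, Subgraph.mem_edgeSet, starSubgraph_adj,
        Set.mem_empty_iff_false, iff_false]
      grind
  · ext x
    simp only [starSubgraph_verts, Set.mem_inter_iff, Set.mem_insert_iff]
    grind

end StarSubgraph

end SimpleGraph

open SimpleGraph

section UpperBound

variable [Fintype V] {G : SimpleGraph V} {S : Finset V}

theorem IsPedantTree.exists_mem_verts_notMem {T : G.Subgraph} (hT : IsPedantTree G S T)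
    (hS : 3 ≤ #S) : ∃ v ∈ T.verts, v ∉ S := by
  classical
  by_contra! hTS
  obtain ⟨hTree, hST, hdeg⟩ := hT
  obtain ⟨a, ha⟩ : S.Nonempty := Finset.card_pos.mp (by omega)
  obtain ⟨x, hx⟩ := Set.ncard_eq_one.mp (hdeg a ha)
  have hax : T.Adj a x := by simp [← Subgraph.mem_neighborSet, hx]
  have hxa : T.neighborSet x = {a} := by
    obtain ⟨y, hy⟩ := Set.ncard_eq_one.mp (hdeg x (hTS x hax.snd_mem))
    have hay : a ∈ T.neighborSet x := hax.symm
    rw [hy, Set.mem_singleton_iff] at hay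
    rw [hy, hay]
  obtain ⟨c, hc, hcax⟩ : ∃ c ∈ S, c ∉ ({a, x} : Finset V) :=
    Finset.exists_mem_notMem_of_card_lt_card ((Finset.card_le_two).trans_lt (by omega))
  let C : Set T.verts := {z | (z : V) = a ∨ (z : V) = x}
  have hC : ∀ ⦃v w⦄, v ∈ C → T.coe.Adj v w → w ∈ C := by
    rintro ⟨v, hv⟩ ⟨w, hw⟩ (rfl | rfl) hvw <;> rw [Subgraph.coe_adj] at hvw
    · exact Or.inr (by rwa [← Set.mem_singleton_iff, ← hx])
    · exact Or.inl (by rwa [← Set.mem_singleton_iff, ← hxa])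
  have hcC := hTree.connected.preconnected.mem_of_forall_adj_mem hC (a := ⟨a, hST ha⟩)
    (Or.inl rfl) ⟨c, hST hc⟩
  exact hcax (by simpa [C] using hcC)

theorem card_le_of_pairwise_internallyDisjoint (hS : 3 ≤ #S) {𝒯 : Finset G.Subgraph}
    (hped : ∀ T ∈ 𝒯, IsPedantTree G S T)
    (hdisj : ∀ T ∈ 𝒯, ∀ T' ∈ 𝒯, T ≠ T' → InternallyDisjoint G S T T') :
    #𝒯 ≤ Fintype.card V - #S := by
  classical
  let inner (T : G.Subgraph) : Finset V := {v ∈ Sᶜ | v ∈ T.verts}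
  have hpair : (𝒯 : Set G.Subgraph).PairwiseDisjoint inner := by
    intro T hT T' hT' hne
    refine Finset.disjoint_left.mpr fun v hv hv' => ?_
    simp only [inner, Finset.mem_filter, Finset.mem_compl] at hv hv'
    have : v ∈ T.verts ∩ T'.verts := ⟨hv.2, hv'.2⟩
    rw [(hdisj T hT T' hT' hne).2] at this
    exact hv.1 this
  have hne : ∀ T ∈ 𝒯, (inner T).Nonempty := fun T hT => by
    obtain ⟨v, hv, hvS⟩ := (hped T hT).exists_mem_verts_notMem hS
    exact ⟨v, by simp [inner, hv, hvS]⟩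
  calc #𝒯 ≤ #(𝒯.biUnion inner) := Finset.card_le_card_biUnion hpair hne
    _ ≤ #Sᶜ := Finset.card_le_card (Finset.biUnion_subset.mpr fun _ _ => Finset.filter_subset _ _)
    _ = Fintype.card V - #S := Finset.card_compl S

theorem localPedantConn_le (hS : 3 ≤ #S) : localPedantConn G S ≤ Fintype.card V - #S :=
  csSup_le' fun _ ⟨_, h𝒯, hped, hdisj⟩ => h𝒯 ▸ card_le_of_pairwise_internallyDisjoint hS hped hdisj

end UpperBound

theorem card_le_localPedantConn [Fintype V] {G : SimpleGraph V} {S U : Finset V}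
    (hU : ∀ u ∈ U, u ∉ S ∧ ∀ s ∈ S, G.Adj u s) : #U ≤ localPedantConn G S := by
  classical
  refine le_csSup ⟨Fintype.card G.Subgraph, ?_⟩ ⟨U.image (G.starSubgraph · S), ?_, ?_, ?_⟩
  · rintro _ ⟨𝒯, rfl, -⟩
    exact Finset.card_le_univ 𝒯
  · exact Finset.card_image_of_injOn (injOn_starSubgraph.mono fun u hu => (hU u hu).1)
  · simp only [Finset.mem_image]
    rintro _ ⟨u, hu, rfl⟩
    exact isPedantTree_starSubgraph (hU u hu).1 (hU u hu).2
  · simp only [Finset.mem_image]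
    rintro _ ⟨u, hu, rfl⟩ _ ⟨u', -, rfl⟩ hne
    exact internallyDisjoint_starSubgraph (hU u hu).1 (fun h => hne (h ▸ rfl))

theorem localPedantConn_top [Fintype V] {S : Finset V} (hS : 3 ≤ #S) :
    localPedantConn (⊤ : SimpleGraph V) S = Fintype.card V - #S := by
  classical
  refine (localPedantConn_le hS).antisymm ?_
  rw [← Finset.card_compl]
  exact card_le_localPedantConn fun u hu => ⟨Finset.mem_compl.mp hu,
    fun s hs => (top_adj u s).mpr fun h => Finset.mem_compl.mp hu (h ▸ hs)⟩

/-- `τ_k(K_n) = n − k` for `3 ≤ k ≤ n`. -/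
theorem pedantConn_completeGraph (n k : ℕ) (h3 : 3 ≤ k) (hkn : k ≤ n) :
    pedantConn (⊤ : SimpleGraph (Fin n)) k = n - k := by
  have hvalues : {m | ∃ S : Finset (Fin n), #S = k ∧ localPedantConn ⊤ S = m} = {n - k} := by
    ext m
    constructor
    · rintro ⟨S, rfl, rfl⟩
      rw [localPedantConn_top h3, Fintype.card_fin]
      rfl
    · rintro rfl
      obtain ⟨S, -, hS⟩ := Finset.exists_subset_card_eq (s := (Finset.univ : Finset (Fin n)))
        (by simpa using hkn)
      exact ⟨S, hS, by rw [localPedantConn_top (hS ▸ h3), Fintype.card_fin, hS]⟩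
  rw [pedantConn, hvalues, csInf_singleton]
end

section
/- Let G be a graph of order n and let k be an integer with 3 ≤ k ≤ n − 1. If the vertex connectivity κ(G) ≥ k, then τ_k(G) ≥ 1, i.e., for every k-subset S of V(G) there exists a pedant S-Steiner tree in G. -/
open SimpleGraph Finset

variable {V : Type*}

/-!
Fix `v ∉ S` and grow a tree from `{v}`, attaching the vertices `s ∈ S` one at a time. Since
`|S \ {s}| < k ≤ κ(G)`, the graph `G - (S \ {s})` is connected and contains a path from `s`
to `v`. Its initial segment up to the first vertex of the current tree meets the tree in a single
vertex and no other vertex of `S`, so attaching it keeps a tree and makes `s` a leaf.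
-/

namespace SimpleGraph

variable {G : SimpleGraph V}

namespace Subgraph

instance finite [Finite V] : Finite G.Subgraph :=
  Finite.of_injective (fun H : G.Subgraph => (H.verts, H.Adj))
    fun _ _ h => Subgraph.ext (congrArg Prod.fst h) (congrArg Prod.snd h)

lemma neighborSet_eq_empty_of_notMem {H : G.Subgraph} {v : V} (hv : v ∉ H.verts) :
    H.neighborSet v = ∅ :=
  Set.eq_empty_of_forall_notMem fun _ hw => hv (H.edge_vert hw)

lemma ncard_edgeSet_coe (H : G.Subgraph) : H.coe.edgeSet.ncard = H.edgeSet.ncard := by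
  rw [← H.image_coe_edgeSet_coe,
    Set.ncard_image_of_injective _ (Sym2.map.injective Subtype.val_injective)]

lemma coe_isTree_iff [Finite V] {H : G.Subgraph} :
    H.coe.IsTree ↔ H.Connected ∧ H.edgeSet.ncard + 1 = H.verts.ncard := by
  rw [isTree_iff_connected_and_card, ← Subgraph.connected_iff', Nat.card_coe_set_eq,
    Nat.card_coe_set_eq, ncard_edgeSet_coe]

lemma coe_isTree_sup [Finite V] {H K : G.Subgraph} (hH : H.coe.IsTree) (hK : K.coe.IsTree)
    {c : V} (hHK : H.verts ∩ K.verts = {c}) : (H ⊔ K).coe.IsTree := by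
  rw [coe_isTree_iff] at hH hK ⊢
  have hdisj : Disjoint H.edgeSet K.edgeSet := by
    refine Set.disjoint_left.mpr fun e heH heK => ?_
    induction e using Sym2.ind with
    | _ x y =>
      have hx : x = c := hHK.subset ⟨H.edge_vert heH, K.edge_vert heK⟩
      have hy : y = c := hHK.subset ⟨H.edge_vert heH.symm, K.edge_vert heK.symm⟩
      exact (H.adj_sub heH).ne (hx.trans hy.symm)
  have hverts := Set.ncard_union_add_ncard_inter H.verts K.verts
  rw [hHK, Set.ncard_singleton] at hverts
  refine ⟨connected_sup hH.1.preconnected hK.1.preconnected ⟨c, hHK.ge rfl⟩, ?_⟩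
  rw [verts_sup, edgeSet_sup, Set.ncard_union_eq hdisj]
  omega

end Subgraph

namespace Walk

lemma IsPath.coe_toSubgraph_isTree [Finite V] {u v : V} {p : G.Walk u v} (hp : p.IsPath) :
    p.toSubgraph.coe.IsTree := by
  classical
  rw [Subgraph.coe_isTree_iff, p.verts_toSubgraph, p.edgeSet_toSubgraph, Walk.edgeSet]
  refine ⟨p.toSubgraph_connected, ?_⟩
  rw [← List.coe_toFinset, ← List.coe_toFinset, Set.ncard_coe_finset, Set.ncard_coe_finset,
    List.toFinset_card_of_nodup hp.edges_nodup, List.toFinset_card_of_nodup hp.support_nodup,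
    length_edges, length_support]

lemma IsPath.exists_prefix_verts_inter_eq_singleton [Fintype V] {a b : V} {p : G.Walk a b}
    (hp : p.IsPath) {A : Set V} (hb : b ∈ A) :
    ∃ (c : V) (q : G.Walk a c), q.IsPath ∧ q.support ⊆ p.support ∧
      q.toSubgraph.verts ∩ A = {c} := by
  classical
  obtain ⟨c, hcA, hcp, hfirst⟩ := p.exists_mem_support_forall_mem_support_imp_eq A.toFinset
    ⟨b, Finset.mem_filter.mpr ⟨Set.mem_toFinset.mpr hb, p.end_mem_support⟩⟩
  refine ⟨c, p.takeUntil c hcp, hp.takeUntil hcp, p.support_takeUntil_subset_support hcp, ?_⟩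
  ext x
  simp only [verts_toSubgraph, Set.mem_inter_iff, Set.mem_ofPred_eq, Set.mem_singleton_iff]
  refine ⟨fun ⟨hxq, hxA⟩ => hfirst x (by simpa using hxA) hxq, ?_⟩
  rintro rfl
  exact ⟨end_mem_support _, by simpa using hcA⟩

end Walk

lemma exists_isPath_of_preconnected_induce {s : Set V} (hs : (G.induce s).Preconnected)
    {a b : V} (ha : a ∈ s) (hb : b ∈ s) :
    ∃ p : G.Walk a b, p.IsPath ∧ ∀ x ∈ p.support, x ∈ s := by
  classical
  obtain ⟨w⟩ := hs ⟨a, ha⟩ ⟨b, hb⟩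
  let f : G.induce s ↪g G := Embedding.induce s
  refine ⟨w.bypass.map f.toHom, w.bypass_isPath.map f.injective, ?_⟩
  intro x hx
  replace hx : x ∈ (w.bypass.map f.toHom).support := hx
  rw [Walk.support_map, List.mem_map] at hx
  obtain ⟨y, -, rfl⟩ := hx
  exact y.2

end SimpleGraph

lemma preconnected_induce_compl_of_card_lt_vConn [Fintype V] {G : SimpleGraph V}
    {U : Finset V} (hU : U.card < vConn G) : (G.induce (↑U : Set V)ᶜ).Preconnected := by
  by_contra h
  exact hU.not_ge (Nat.sInf_le ⟨U, rfl, Or.inl h⟩)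

def IsPartialPedantTree (G : SimpleGraph V) (S S' : Finset V) (v : V) (T : G.Subgraph) : Prop :=
  T.coe.IsTree ∧ v ∈ T.verts ∧ T.verts ∩ ↑S = ↑S' ∧ ∀ s ∈ S', (T.neighborSet s).ncard = 1

section Construction

variable [Fintype V] {G : SimpleGraph V} {S S' : Finset V} {v s : V}

lemma isPartialPedantTree_singletonSubgraph (hv : v ∉ S) :
    IsPartialPedantTree G S ∅ v (G.singletonSubgraph v) := by
  refine ⟨?_, rfl, ?_, by simp⟩
  · rw [Subgraph.coe_isTree_iff]
    exact ⟨Subgraph.singletonSubgraph_connected, by simp⟩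
  · simpa using hv

lemma IsPartialPedantTree.insert [DecidableEq V] {T : G.Subgraph}
    (hT : IsPartialPedantTree G S S' v T) (hκ : S.card ≤ vConn G) (hv : v ∉ S) (hs : s ∈ S)
    (hsS' : s ∉ S') :
    ∃ T' : G.Subgraph, IsPartialPedantTree G S (insert s S') v T' := by
  obtain ⟨hTtree, hvT, hTS, hleaf⟩ := hT
  have hsT : s ∉ T.verts := fun h => hsS' (Finset.mem_coe.mp (hTS ▸ ⟨h, hs⟩))
  have hU : (S.erase s).card < vConn G := by
    rw [Finset.card_erase_of_mem hs]
    have := Finset.card_pos.mpr ⟨s, hs⟩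
    omega
  obtain ⟨p, hp, hpU⟩ := exists_isPath_of_preconnected_induce
    (preconnected_induce_compl_of_card_lt_vConn hU) (a := s) (b := v) (by simp) (by simp [hv])
  obtain ⟨c, q, hq, hqp, hqT⟩ := hp.exists_prefix_verts_inter_eq_singleton hvT
  have hqS : q.toSubgraph.verts ∩ ↑S = {s} := by
    ext x
    simp only [Walk.verts_toSubgraph, Set.mem_inter_iff, Set.mem_ofPred_eq,
      Set.mem_singleton_iff, Finset.mem_coe]
    refine ⟨fun ⟨hxq, hxS⟩ => ?_, by rintro rfl; exact ⟨q.start_mem_support, hs⟩⟩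
    by_contra hxs
    exact hpU x (hqp hxq) (by simp [hxs, hxS])
  refine ⟨q.toSubgraph ⊔ T, Subgraph.coe_isTree_sup hq.coe_toSubgraph_isTree hTtree hqT,
    Or.inr hvT, ?_, ?_⟩
  · rw [Subgraph.verts_sup, Set.union_inter_distrib_right, hqS, hTS, Finset.coe_insert,
      Set.insert_eq]
  · intro t ht
    rw [Subgraph.neighborSet_sup]
    rcases Finset.mem_insert.mp ht with rfl | ht
    · have hnil : ¬ q.Nil := fun h => hsT (by rw [h.eq]; exact (hqT.ge rfl).2)
      rw [hq.neighborSet_toSubgraph_startpoint hnil,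
        Subgraph.neighborSet_eq_empty_of_notMem hsT, Set.union_empty, Set.ncard_singleton]
    · have htq : t ∉ q.toSubgraph.verts := fun h => by
        have hts : t ∈ q.toSubgraph.verts ∩ ↑S := ⟨h, (hTS.ge ht).2⟩
        rw [hqS, Set.mem_singleton_iff] at hts
        exact hsS' (hts ▸ ht)
      rw [Subgraph.neighborSet_eq_empty_of_notMem htq, Set.empty_union]
      exact hleaf t ht

lemma exists_isPartialPedantTree (hκ : S.card ≤ vConn G) (hv : v ∉ S) (hS' : S' ⊆ S) :
    ∃ T : G.Subgraph, IsPartialPedantTree G S S' v T := by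
  classical
  induction S' using Finset.induction_on with
  | empty => exact ⟨_, isPartialPedantTree_singletonSubgraph hv⟩
  | insert s S' hsS' ih =>
    obtain ⟨T, hT⟩ := ih ((Finset.subset_insert s S').trans hS')
    exact hT.insert hκ hv (hS' (Finset.mem_insert_self s S')) hsS'

lemma exists_isPedantTree (hκ : S.card ≤ vConn G) (hS : S.card < Fintype.card V) :
    ∃ T : G.Subgraph, IsPedantTree G S T := by
  obtain ⟨v, -, hv⟩ := Finset.exists_mem_notMem_of_card_lt_card
    (hS.trans_eq Finset.card_univ.symm)
  obtain ⟨T, hTtree, -, hTS, hleaf⟩ := exists_isPartialPedantTree hκ hv subset_rfl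
  exact ⟨T, hTtree, Set.inter_eq_right.mp hTS, hleaf⟩

end Construction

lemma IsPedantTree.one_le_localPedantConn [Fintype V] {G : SimpleGraph V} {S : Finset V}
    {T : G.Subgraph} (hT : IsPedantTree G S T) : 1 ≤ localPedantConn G S := by
  have := Fintype.ofFinite G.Subgraph
  refine le_csSup ⟨Fintype.card G.Subgraph, ?_⟩
    ⟨{T}, Finset.card_singleton T, by simpa using hT, by simp⟩
  rintro m ⟨𝒯, rfl, -, -⟩
  exact Finset.card_le_univ 𝒯

lemma le_pedantConn [Fintype V] {G : SimpleGraph V} {k m : ℕ} (hk : k ≤ Fintype.card V)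
    (h : ∀ S : Finset V, S.card = k → m ≤ localPedantConn G S) : m ≤ pedantConn G k := by
  obtain ⟨S₀, -, hS₀⟩ := Finset.exists_subset_card_eq (hk.trans_eq Finset.card_univ.symm)
  refine le_csInf ⟨_, S₀, hS₀, rfl⟩ ?_
  rintro _ ⟨S, hS, rfl⟩
  exact h S hS

/-- if `3 ≤ k ≤ n − 1` and `κ(G) ≥ k`, then `τ_k(G) ≥ 1`; i.e. every
`k`-set `S` admits a pedant `S`-Steiner tree. -/
theorem pedantConn_pos_of_vConn [Fintype V] (G : SimpleGraph V) (k : ℕ)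
    (h3 : 3 ≤ k) (hkn : k ≤ Fintype.card V - 1) (hκ : k ≤ vConn G) :
    1 ≤ pedantConn G k ∧
      ∀ S : Finset V, S.card = k → ∃ T : G.Subgraph, IsPedantTree G S T := by
  have hk : k < Fintype.card V := by omega
  have hpedant (S : Finset V) (hS : S.card = k) : ∃ T : G.Subgraph, IsPedantTree G S T :=
    exists_isPedantTree (hS ▸ hκ) (hS ▸ hk)
  refine ⟨le_pedantConn hk.le fun S hS => ?_, hpedant⟩
  obtain ⟨T, hT⟩ := hpedant S hS
  exact hT.one_le_localPedantConn
end

section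
/- Let k, n be integers with 3 ≤ k ≤ n, and let G be a graph of order n. Then τ_k(G) + τ_k(Ḡ) ≤ n − k, where Ḡ is the complement of G. -/
open SimpleGraph Finset

variable {V : Type*}

/-- In a pedant tree with `|S| ≥ 3`, every `s ∈ S` has a unique neighbor, which is not in `S`. -/
lemma pedant_nbr' [Fintype V] {H : SimpleGraph V} {S : Finset V} {T : H.Subgraph}
    (hk : 3 ≤ S.card)
    (htree : T.coe.IsTree) (hsub : (↑S : Set V) ⊆ T.verts)
    (hdeg : ∀ v ∈ S, (T.neighborSet v).ncard = 1)
    {s : V} (hs : s ∈ S) :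
    ∃ w, T.neighborSet s = {w} ∧ w ∉ S := by
  classical
  obtain ⟨w, hw⟩ := Set.ncard_eq_one.mp (hdeg s hs)
  refine ⟨w, hw, ?_⟩
  intro hwS
  obtain ⟨w', hw'⟩ := Set.ncard_eq_one.mp (hdeg w hwS)
  have hadj : T.Adj s w := by
    have : w ∈ T.neighborSet s := by rw [hw]; rfl
    exact this
  have hsw' : s ∈ T.neighborSet w := hadj.symm
  have hws : w' = s := by rw [hw'] at hsw'; exact hsw'.symm
  rw [hws] at hw'
  -- every vertex of T is in {s, w}
  have walkmem : ∀ (a b : T.verts) (p : T.coe.Walk a b),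
      (a : V) ∈ ({s, w} : Set V) → (b : V) ∈ ({s, w} : Set V) := by
    intro a b p
    induction p with
    | nil => exact id
    | @cons a c b h p ih =>
      intro ha
      apply ih
      have hadj' : T.Adj (a : V) (c : V) := h
      rcases ha with ha | ha
      · have : (c : V) ∈ T.neighborSet s := by rw [← ha]; exact hadj'
        rw [hw] at this
        exact Or.inr this
      · have : (c : V) ∈ T.neighborSet w := by
          rw [← (show (a:V) = w from ha)]; exact hadj'
        rw [hw'] at this
        exact Or.inl this
  have hverts : T.verts ⊆ ({s, w} : Set V) := by
    intro x hx
    have hcon := htree.isConnected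
    obtain ⟨p⟩ := hcon.preconnected ⟨s, hsub hs⟩ ⟨x, hx⟩
    exact walkmem _ _ p (Or.inl rfl)
  have hS2 : S ⊆ ({s, w} : Finset V) := by
    intro x hx
    have := hverts (hsub hx)
    simp only [Set.mem_insert_iff, Set.mem_singleton_iff] at this
    rcases this with h | h <;> simp [h]
  have : S.card ≤ 2 := le_trans (Finset.card_le_card hS2)
    (le_trans (Finset.card_insert_le _ _) (by simp))
  omega

open scoped Classical in
noncomputable def nbr [Fintype V] {H : SimpleGraph V} (s : V) (T : H.Subgraph) : V :=
  if h : ∃ w, T.neighborSet s = {w} then h.choose else s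

lemma nbr_spec [Fintype V] {H : SimpleGraph V} {S : Finset V} {T : H.Subgraph}
    (hk : 3 ≤ S.card) (hT : IsPedantTree H S T) {s : V} (hs : s ∈ S) :
    T.neighborSet s = {nbr s T} ∧ nbr s T ∉ S := by
  obtain ⟨htree, hsub, hdeg⟩ := hT
  obtain ⟨w, hw, hwS⟩ := pedant_nbr' hk htree hsub hdeg hs
  have hex : ∃ w, T.neighborSet s = {w} := ⟨w, hw⟩
  have hnbr : nbr s T = w := by
    unfold nbr
    rw [dif_pos hex]
    exact (Set.singleton_eq_singleton_iff.mp (hw.symm.trans hex.choose_spec)).symm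
  rw [hnbr]; exact ⟨hw, hwS⟩

lemma key_lemma [Fintype V] (G : SimpleGraph V) (S : Finset V) (hk : 3 ≤ S.card)
    (𝒯₁ : Finset G.Subgraph) (𝒯₂ : Finset Gᶜ.Subgraph)
    (h1 : ∀ T ∈ 𝒯₁, IsPedantTree G S T)
    (h1d : ∀ T ∈ 𝒯₁, ∀ T' ∈ 𝒯₁, T ≠ T' → InternallyDisjoint G S T T')
    (h2 : ∀ T ∈ 𝒯₂, IsPedantTree Gᶜ S T)
    (h2d : ∀ T ∈ 𝒯₂, ∀ T' ∈ 𝒯₂, T ≠ T' → InternallyDisjoint Gᶜ S T T') :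
    𝒯₁.card + 𝒯₂.card ≤ Fintype.card V - S.card := by
  classical
  have hspos : 0 < S.card := by omega
  obtain ⟨s, hs⟩ := Finset.card_pos.mp hspos
  set N₁ : Finset V := 𝒯₁.image (nbr s) with hN₁
  set N₂ : Finset V := 𝒯₂.image (nbr s) with hN₂
  -- injectivity on each family
  have hinj : ∀ (H : SimpleGraph V) (𝒯 : Finset H.Subgraph),
      (∀ T ∈ 𝒯, IsPedantTree H S T) →
      (∀ T ∈ 𝒯, ∀ T' ∈ 𝒯, T ≠ T' → InternallyDisjoint H S T T') →
      Set.InjOn (nbr s) (↑𝒯 : Set H.Subgraph) := by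
    intro H 𝒯 hped hdisj T hT T' hT' heq
    by_contra hne
    obtain ⟨hwT, hwSnot⟩ := nbr_spec hk (hped T hT) hs
    obtain ⟨hwT', _⟩ := nbr_spec hk (hped T' hT') hs
    have hadjT : T.Adj s (nbr s T) := by
      have : nbr s T ∈ T.neighborSet s := by rw [hwT]; rfl
      exact this
    have hadjT' : T'.Adj s (nbr s T) := by
      have : nbr s T ∈ T'.neighborSet s := by rw [hwT', ← heq]; rfl
      exact this
    have hmem : nbr s T ∈ T.verts ∩ T'.verts := ⟨hadjT.snd_mem, hadjT'.snd_mem⟩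
    rw [(hdisj T hT T' hT' hne).2] at hmem
    exact hwSnot hmem
  have hc1 : N₁.card = 𝒯₁.card := Finset.card_image_of_injOn (hinj G 𝒯₁ h1 h1d)
  have hc2 : N₂.card = 𝒯₂.card := Finset.card_image_of_injOn (hinj Gᶜ 𝒯₂ h2 h2d)
  -- disjointness across families
  have hdis : Disjoint N₁ N₂ := by
    rw [Finset.disjoint_left]
    intro w hw1 hw2
    obtain ⟨T, hT, rfl⟩ := Finset.mem_image.mp hw1
    obtain ⟨T', hT', heq⟩ := Finset.mem_image.mp hw2
    obtain ⟨hwT, _⟩ := nbr_spec hk (h1 T hT) hs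
    obtain ⟨hwT', _⟩ := nbr_spec hk (h2 T' hT') hs
    have hadjG : G.Adj s (nbr s T) := by
      have : nbr s T ∈ T.neighborSet s := by rw [hwT]; rfl
      exact T.adj_sub this
    have hadjGc : Gᶜ.Adj s (nbr s T) := by
      have : nbr s T ∈ T'.neighborSet s := by rw [hwT', heq]; rfl
      exact T'.adj_sub this
    exact hadjGc.2 hadjG
  -- union avoids S
  have hsubS : N₁ ∪ N₂ ⊆ Finset.univ \ S := by
    intro w hw
    rcases Finset.mem_union.mp hw with hw | hw
    · obtain ⟨T, hT, rfl⟩ := Finset.mem_image.mp hw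
      exact Finset.mem_sdiff.mpr ⟨Finset.mem_univ _, (nbr_spec hk (h1 T hT) hs).2⟩
    · obtain ⟨T, hT, rfl⟩ := Finset.mem_image.mp hw
      exact Finset.mem_sdiff.mpr ⟨Finset.mem_univ _, (nbr_spec hk (h2 T hT) hs).2⟩
  calc 𝒯₁.card + 𝒯₂.card = N₁.card + N₂.card := by rw [hc1, hc2]
    _ = (N₁ ∪ N₂).card := (Finset.card_union_of_disjoint hdis).symm
    _ ≤ (Finset.univ \ S).card := Finset.card_le_card hsubS
    _ = Fintype.card V - S.card := by
        rw [Finset.card_sdiff_of_subset (Finset.subset_univ S), Finset.card_univ]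

lemma local_sum [Fintype V] (G : SimpleGraph V) (S : Finset V) (hk : 3 ≤ S.card) :
    localPedantConn G S + localPedantConn Gᶜ S ≤ Fintype.card V - S.card := by
  classical
  set A := {m | ∃ 𝒯 : Finset G.Subgraph, 𝒯.card = m ∧ (∀ T ∈ 𝒯, IsPedantTree G S T) ∧
    ∀ T ∈ 𝒯, ∀ T' ∈ 𝒯, T ≠ T' → InternallyDisjoint G S T T'} with hA
  set B := {m | ∃ 𝒯 : Finset Gᶜ.Subgraph, 𝒯.card = m ∧ (∀ T ∈ 𝒯, IsPedantTree Gᶜ S T) ∧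
    ∀ T ∈ 𝒯, ∀ T' ∈ 𝒯, T ≠ T' → InternallyDisjoint Gᶜ S T T'} with hB
  have hAne : A.Nonempty := ⟨0, ∅, by simp⟩
  have hBne : B.Nonempty := ⟨0, ∅, by simp⟩
  have hAbdd : BddAbove A := by
    refine ⟨Fintype.card V - S.card, fun m hm => ?_⟩
    obtain ⟨𝒯, rfl, hped, hdis⟩ := hm
    have := key_lemma G S hk 𝒯 ∅ hped hdis (by simp) (by simp)
    simpa using this
  have hBbdd : BddAbove B := by
    refine ⟨Fintype.card V - S.card, fun m hm => ?_⟩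
    obtain ⟨𝒯, rfl, hped, hdis⟩ := hm
    have := key_lemma G S hk ∅ 𝒯 (by simp) (by simp) hped hdis
    simpa using this
  have hAmem : sSup A ∈ A := Nat.sSup_mem hAne hAbdd
  have hBmem : sSup B ∈ B := Nat.sSup_mem hBne hBbdd
  obtain ⟨𝒯₁, h𝒯₁, hped1, hdis1⟩ := hAmem
  obtain ⟨𝒯₂, h𝒯₂, hped2, hdis2⟩ := hBmem
  have := key_lemma G S hk 𝒯₁ 𝒯₂ hped1 hdis1 hped2 hdis2
  rw [h𝒯₁, h𝒯₂] at this
  exact this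

theorem pedantConn_add_compl' [Fintype V] (G : SimpleGraph V) (k : ℕ)
    (h3 : 3 ≤ k) (hkn : k ≤ Fintype.card V) :
    pedantConn G k + pedantConn Gᶜ k ≤ Fintype.card V - k := by
  classical
  obtain ⟨S, -, hScard⟩ := Finset.exists_subset_card_eq
    (show k ≤ (Finset.univ : Finset V).card by simpa using hkn)
  have h1 : pedantConn G k ≤ localPedantConn G S := Nat.sInf_le ⟨S, hScard, rfl⟩
  have h2 : pedantConn Gᶜ k ≤ localPedantConn Gᶜ S := Nat.sInf_le ⟨S, hScard, rfl⟩
  have h3' := local_sum G S (by omega : 3 ≤ S.card)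
  rw [hScard] at h3'
  omega

/-- `τ_k(G) + τ_k(Ḡ) ≤ n − k` for `3 ≤ k ≤ n`. -/
theorem pedantConn_add_compl [Fintype V] (G : SimpleGraph V) (k : ℕ)
    (h3 : 3 ≤ k) (hkn : k ≤ Fintype.card V) :
    pedantConn G k + pedantConn Gᶜ k ≤ Fintype.card V - k := pedantConn_add_compl' G k h3 hkn
end

section
/- Let k, n be integers with 3 ≤ k ≤ n, and let G be a graph of order n. Then τ_k(G) · τ_k(Ḡ) ≤ ⌊(n − k)/2⌋², where Ḡ is the complement of G. -/
open SimpleGraph Finset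

variable {V : Type*}

/-! For `|S| ≥ 3`, a vertex `v ∈ S` is a leaf of every pedant `S`-tree, and its neighbour there
lies outside `S`: two adjacent leaves would already form the whole tree. Internally disjoint
trees meet only in `S`, so they use distinct such neighbours and `τ_G(S) ≤ |N_G(v) \ S|`.
As `N_G(v) \ S` and `N_Ḡ(v) \ S` partition `V \ S`, this gives `τ_k(G) + τ_k(Ḡ) ≤ n - k`.
If both terms are positive the inequality is strict: pick a neighbour `x` and a non-neighbour `y`
of `v` outside `S` and replace some `w ∈ S \ {v}` by `x` in the bound for `G` and by `y` in the
bound for `Ḡ`; the first swap removes `x` from `N_G(v) \ S`, the second changes nothing.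
By AM–GM, `τ_k(G) + τ_k(Ḡ) < n - k` forces `τ_k(G) τ_k(Ḡ) ≤ ⌊(n - k)/2⌋²`. -/

namespace SimpleGraph

theorem Reachable.eq_or_eq_of_neighborSet_eq_singleton {G : SimpleGraph V} {x y z : V}
    (hx : G.neighborSet x = {y}) (hy : G.neighborSet y = {x}) (h : G.Reachable x z) :
    z = x ∨ z = y := by
  rw [reachable_iff_reflTransGen] at h
  induction h with
  | refl => exact Or.inl rfl
  | tail _ hadj ih =>
    rcases ih with rfl | rfl
    · exact Or.inr (hx ▸ hadj : _ ∈ ({y} : Set V))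
    · exact Or.inl (hy ▸ hadj : _ ∈ ({x} : Set V))

theorem ncard_neighborSet_diff_add_ncard_compl [Fintype V] (G : SimpleGraph V) {S : Finset V}
    {v : V} (hv : v ∈ S) :
    (G.neighborSet v \ S).ncard + (Gᶜ.neighborSet v \ S).ncard = Fintype.card V - #S := by
  have hdisj : Disjoint (G.neighborSet v \ S) (Gᶜ.neighborSet v \ S) :=
    Set.disjoint_left.mpr fun _ hG hGc => ((compl_adj G _ _).mp hGc.1).2 hG.1
  have hcompl := Set.ncard_add_ncard_compl (S : Set V)
  rw [Set.ncard_coe_finset, Nat.card_eq_fintype_card] at hcompl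
  rw [← Set.ncard_union_eq hdisj, ← Nat.eq_sub_of_add_eq' hcompl]
  congr 1
  ext u
  by_cases huv : u = v
  · subst huv; simp [hv]
  · simp only [Set.mem_union, Set.mem_sdiff, mem_neighborSet, SetLike.mem_coe, compl_adj,
      Set.mem_compl_iff, ne_eq, Ne.symm huv, not_false_eq_true, true_and]
    tauto

theorem ncard_neighborSet_diff_insert_lt [Finite V] {G : SimpleGraph V} {T : Set V}
    {v x y : V} (hx : G.Adj v x) (hxT : x ∉ T) (hy : ¬ G.Adj v y) :
    (G.neighborSet v \ insert x T).ncard < (G.neighborSet v \ insert y T).ncard := by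
  have hinsx : G.neighborSet v \ insert x T = (G.neighborSet v \ T) \ {x} := by
    ext; simp only [Set.mem_sdiff, Set.mem_insert_iff, Set.mem_singleton_iff]; tauto
  have hinsy : G.neighborSet v \ insert y T = G.neighborSet v \ T := by
    ext u; simp only [Set.mem_sdiff, Set.mem_insert_iff, mem_neighborSet]
    exact ⟨fun h => ⟨h.1, fun hu => h.2 (Or.inr hu)⟩,
      fun h => ⟨h.1, by rintro (rfl | hu); exacts [hy h.1, h.2 hu]⟩⟩
  rw [hinsx, hinsy]
  exact Set.ncard_sdiff_singleton_lt_of_mem ⟨hx, hxT⟩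

end SimpleGraph

open SimpleGraph

theorem IsPedantTree.notMem_of_adj [Fintype V] {H : SimpleGraph V} {S : Finset V}
    {T : H.Subgraph} (hT : IsPedantTree H S T) (hS : 3 ≤ #S) {v u : V} (hv : v ∈ S)
    (hvu : T.Adj v u) : u ∉ S := by
  classical
  intro hu
  have leaf : ∀ {a b}, a ∈ S → T.Adj a b → T.spanningCoe.neighborSet a = {b} :=
      fun {a b} ha hab => by
    show T.neighborSet a = {b}
    obtain ⟨c, hc⟩ := Set.ncard_eq_one.mp (hT.2.2 a ha)
    rwa [← (hc ▸ hab : b ∈ ({c} : Set V))] at hc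
  obtain ⟨s, hs, hsvu⟩ := Finset.exists_mem_notMem_of_card_lt_card
    ((Finset.card_le_two (a := v) (b := u)).trans_lt hS)
  have hreach : T.spanningCoe.Reachable v s :=
    (hT.1.connected.preconnected ⟨v, hT.2.1 hv⟩ ⟨s, hT.2.1 hs⟩).map ⟨Subtype.val, id⟩
  rcases hreach.eq_or_eq_of_neighborSet_eq_singleton (leaf hv hvu) (leaf hu hvu.symm)
    with rfl | rfl <;> simp at hsvu

theorem card_le_ncard_neighborSet_diff_of_internallyDisjoint [Fintype V] {H : SimpleGraph V}
    {S : Finset V} (hS : 3 ≤ #S) {v : V} (hv : v ∈ S) {𝒯 : Finset H.Subgraph}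
    (hpedant : ∀ T ∈ 𝒯, IsPedantTree H S T)
    (hdisj : ∀ T ∈ 𝒯, ∀ T' ∈ 𝒯, T ≠ T' → InternallyDisjoint H S T T') :
    #𝒯 ≤ (H.neighborSet v \ S).ncard := by
  have : Nonempty V := ⟨v⟩
  have hnbr : ∀ T ∈ 𝒯, ∃ u, T.Adj v u := fun T hT =>
    Set.nonempty_of_ncard_ne_zero (s := T.neighborSet v) <| by
      rw [(hpedant T hT).2.2 v hv]; exact one_ne_zero
  choose! f hf using hnbr
  have hout : ∀ T ∈ 𝒯, f T ∉ S := fun T hT => (hpedant T hT).notMem_of_adj hS hv (hf T hT)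
  rw [← Set.ncard_coe_finset]
  refine Set.ncard_le_ncard_of_injOn f (fun T hT => ⟨(hf T hT).adj_sub, hout T hT⟩) ?_
  intro T (hT : T ∈ 𝒯) T' (hT' : T' ∈ 𝒯) heq
  by_contra hne
  apply hout T hT
  rw [← Finset.mem_coe, ← (hdisj T hT T' hT' hne).2]
  exact ⟨(hf T hT).snd_mem, heq ▸ (hf T' hT').snd_mem⟩

theorem localPedantConn_le_ncard_neighborSet_diff [Fintype V] {H : SimpleGraph V}
    {S : Finset V} (hS : 3 ≤ #S) {v : V} (hv : v ∈ S) :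
    localPedantConn H S ≤ (H.neighborSet v \ S).ncard :=
  csSup_le' <| by
    rintro _ ⟨_, rfl, hpedant, hdisj⟩
    exact card_le_ncard_neighborSet_diff_of_internallyDisjoint hS hv hpedant hdisj

theorem pedantConn_card_le_localPedantConn [Fintype V] (H : SimpleGraph V) (S : Finset V) :
    pedantConn H #S ≤ localPedantConn H S :=
  Nat.sInf_le ⟨S, rfl, rfl⟩

theorem pedantConn_le_ncard_neighborSet_diff [Fintype V] {H : SimpleGraph V} {k : ℕ}
    (hk : 3 ≤ k) {S : Finset V} (hSk : #S = k) {v : V} (hv : v ∈ S) :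
    pedantConn H k ≤ (H.neighborSet v \ S).ncard := by
  subst hSk
  exact (pedantConn_card_le_localPedantConn H S).trans
    (localPedantConn_le_ncard_neighborSet_diff hk hv)

theorem Nat.mul_le_sq_half_of_add_lt {a b s : ℕ} (h : a + b < s) : a * b ≤ (s / 2) ^ 2 := by
  have hsum : a + b ≤ 2 * (s / 2) := by omega
  nlinarith [sq_nonneg ((a : ℤ) - b)]

theorem pedantConn_add_pedantConn_compl_lt [Fintype V] (G : SimpleGraph V) {k : ℕ}
    (hk : 3 ≤ k) (hkn : k ≤ Fintype.card V) (hG : 0 < pedantConn G k)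
    (hGc : 0 < pedantConn Gᶜ k) :
    pedantConn G k + pedantConn Gᶜ k < Fintype.card V - k := by
  classical
  obtain ⟨S, -, hSk⟩ := Finset.exists_subset_card_eq (s := univ) (by simpa using hkn)
  obtain ⟨v, hv⟩ : S.Nonempty := card_pos.mp (by omega)
  obtain ⟨w, hw, hwv⟩ := S.exists_mem_ne (by omega) v
  obtain ⟨x, hxG, hxS⟩ : (G.neighborSet v \ S).Nonempty :=
    Set.nonempty_of_ncard_ne_zero
      (hG.trans_le (pedantConn_le_ncard_neighborSet_diff hk hSk hv)).ne'
  obtain ⟨y, hyGc, hyS⟩ : (Gᶜ.neighborSet v \ S).Nonempty :=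
    Set.nonempty_of_ncard_ne_zero
      (hGc.trans_le (pedantConn_le_ncard_neighborSet_diff hk hSk hv)).ne'
  have hcard : ∀ z ∉ S, #(insert z (S.erase w)) = k := fun z hz => by
    rw [card_insert_of_notMem (fun h => hz (mem_of_mem_erase h)), card_erase_of_mem hw]
    omega
  have hvmem : ∀ z, v ∈ insert z (S.erase w) :=
    fun z => mem_insert_of_mem (mem_erase.mpr ⟨hwv.symm, hv⟩)
  calc pedantConn G k + pedantConn Gᶜ k
      ≤ (G.neighborSet v \ ↑(insert x (S.erase w))).ncard
        + (Gᶜ.neighborSet v \ ↑(insert y (S.erase w))).ncard :=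
        add_le_add (pedantConn_le_ncard_neighborSet_diff hk (hcard x hxS) (hvmem x))
          (pedantConn_le_ncard_neighborSet_diff hk (hcard y hyS) (hvmem y))
    _ < (G.neighborSet v \ ↑(insert y (S.erase w))).ncard
        + (Gᶜ.neighborSet v \ ↑(insert y (S.erase w))).ncard := by
        gcongr
        rw [coe_insert, coe_insert]
        exact ncard_neighborSet_diff_insert_lt hxG (fun h => hxS (mem_of_mem_erase h))
          ((compl_adj G v y).mp hyGc).2
    _ = Fintype.card V - k := by
        rw [ncard_neighborSet_diff_add_ncard_compl G (hvmem y), hcard y hyS]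

/-- `τ_k(G) · τ_k(Ḡ) ≤ ⌊(n − k)/2⌋²` for `3 ≤ k ≤ n`. -/
theorem pedantConn_mul_compl [Fintype V] (G : SimpleGraph V) (k : ℕ)
    (h3 : 3 ≤ k) (hkn : k ≤ Fintype.card V) :
    pedantConn G k * pedantConn Gᶜ k ≤ ((Fintype.card V - k) / 2) ^ 2 := by
  rcases (pedantConn G k).eq_zero_or_pos with hG | hG
  · simp [hG]
  rcases (pedantConn Gᶜ k).eq_zero_or_pos with hGc | hGc
  · simp [hGc]
  exact Nat.mul_le_sq_half_of_add_lt (pedantConn_add_pedantConn_compl_lt G h3 hkn hG hGc)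
end

section
/- Let k, n be integers with 3 ≤ k ≤ n and let G be a graph of order n. If τ_k(G) + τ_k(Ḡ) = n − k, then Δ(G) − δ(G) ≤ k − 1, where Δ and δ denote maximum and minimum degree and Ḡ is the complement of G. -/
open SimpleGraph Finset

variable {V : Type*}

lemma localPedantConn_le_ncard [Fintype V] (H : SimpleGraph V) (S : Finset V) (v : V)
    (hv : v ∈ S) : localPedantConn H S ≤ (H.neighborSet v).ncard := by
  classical
  have : Nonempty V := ⟨v⟩
  refine csSup_le ⟨0, ⟨∅, by simp, by simp, by simp⟩⟩ ?_
  rintro m ⟨𝒯, rfl, htree, hdisj⟩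
  have hw : ∀ T ∈ 𝒯, ∃ w, (T : H.Subgraph).neighborSet v = {w} := fun T hT =>
    Set.ncard_eq_one.mp ((htree T hT).2.2 v hv)
  choose! w hwspec using hw
  rw [← Set.ncard_coe_finset]
  have hadjT : ∀ T ∈ 𝒯, T.Adj v (w T) := by
    intro T hT
    have h1 : w T ∈ (T : H.Subgraph).neighborSet v := by
      rw [hwspec T hT]; exact rfl
    exact h1
  apply Set.ncard_le_ncard_of_injOn w
  · intro T hT
    exact T.adj_sub (hadjT T hT)
  · intro T hT T' hT' heq
    by_contra hne
    obtain ⟨hE, -⟩ := hdisj T hT T' hT' hne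
    have h1 : s(v, w T) ∈ T.edgeSet := (hadjT T hT)
    have h2 : s(v, w T) ∈ T'.edgeSet := by
      rw [heq]; exact (hadjT T' hT')
    have : s(v, w T) ∈ T.edgeSet ∩ T'.edgeSet := ⟨h1, h2⟩
    rw [hE] at this
    exact this

lemma pedantConn_le_ncard [Fintype V] (H : SimpleGraph V) (k : ℕ) (hk : 1 ≤ k)
    (hkn : k ≤ Fintype.card V) (v : V) :
    pedantConn H k ≤ (H.neighborSet v).ncard := by
  classical
  obtain ⟨S, hvS, -, hScard⟩ := Finset.exists_subsuperset_card_eq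
    (Finset.subset_univ {v}) (by simpa using hk) (by simpa using hkn)
  calc pedantConn H k ≤ localPedantConn H S := Nat.sInf_le ⟨S, hScard, rfl⟩
    _ ≤ (H.neighborSet v).ncard :=
      localPedantConn_le_ncard H S v (hvS (Finset.mem_singleton_self v))

lemma ncard_neighborSet_eq_degree [Fintype V] (H : SimpleGraph V) [DecidableRel H.Adj]
    (v : V) : (H.neighborSet v).ncard = H.degree v := by
  rw [Set.ncard_eq_toFinset_card', ← SimpleGraph.card_neighborSet_eq_degree,
    Set.toFinset_card]

/-- if `τ_k(G) + τ_k(Ḡ) = n − k` (with `3 ≤ k ≤ n`), then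
`Δ(G) − δ(G) ≤ k − 1`. -/
theorem maxDegree_sub_minDegree [Fintype V] (G : SimpleGraph V) [DecidableRel G.Adj]
    (k : ℕ) (h3 : 3 ≤ k) (hkn : k ≤ Fintype.card V)
    (h : pedantConn G k + pedantConn Gᶜ k = Fintype.card V - k) :
    G.maxDegree - G.minDegree ≤ k - 1 := by
  classical
  have hV : 0 < Fintype.card V := by omega
  have : Nonempty V := Fintype.card_pos_iff.mp hV
  obtain ⟨u, hu⟩ := G.exists_minimal_degree_vertex
  obtain ⟨v, hv⟩ := G.exists_maximal_degree_vertex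
  have h1 : pedantConn G k ≤ G.degree u := by
    rw [← ncard_neighborSet_eq_degree]
    exact pedantConn_le_ncard G k (by omega) hkn u
  have h2 : pedantConn Gᶜ k ≤ Gᶜ.degree v := by
    rw [← ncard_neighborSet_eq_degree]
    exact pedantConn_le_ncard Gᶜ k (by omega) hkn v
  have h3' : Gᶜ.degree v = Fintype.card V - 1 - G.degree v := G.degree_compl v
  have h4 : G.degree v < Fintype.card V := G.degree_lt_card_verts v
  omega
end
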